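/- arXiv:1605.05695 — 6 statements merged into one kernel-verified Lean document; each statement's English description precedes it below -/
import Mathlib

section
/- Sokhotsky–Weierstrass representation: for a bounded continuous probability density Φ on R and any point x where Φ is continuous, Φ(x) = -(1/π) lim_{ε→0+} Im E[1/(x - X + iε)], where X has density Φ. -/
open MeasureTheory Set Filter Topology

/-! Writing `z = x - y + iε`, the imaginary part of `Φ(y)/z` is `-Φ(y) ε/((x-y)² + ε²)`,
so `-(1/π) Im ∫ Φ(y)/z dy` is the convolution of `Φ` with the Poisson kernel
`ε/(π((x-y)² + ε²))`. The substitution `y = x + εu` turns it into `π⁻¹ ∫ Φ(x + εu)/(1 + u²) du`,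
and since `Φ` is bounded, dominated convergence (with dominant `C/(1 + u²)`) lets `ε → 0`,
giving `π⁻¹ Φ(x) ∫ du/(1 + u²) = Φ(x)`. -/

lemma ofReal_div_add_mul_I_im (a t ε : ℝ) :
    ((a : ℂ) / (t + ε * Complex.I)).im = -(a * (ε / (t ^ 2 + ε ^ 2))) := by
  rw [Complex.div_im, Complex.normSq_add_mul_I]
  simp only [Complex.ofReal_re, Complex.ofReal_im, Complex.add_re, Complex.add_im,
    Complex.mul_re, Complex.mul_im, Complex.I_re, Complex.I_im]
  ring

lemma integrable_ofReal_div_sub_add_mul_I {f : ℝ → ℝ} (hf : Integrable f) (x : ℝ) {ε : ℝ}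
    (hε : 0 < ε) : Integrable fun y : ℝ => (f y : ℂ) / ((x : ℂ) - y + ε * Complex.I) := by
  have hden : ∀ y : ℝ, ε ≤ ‖(x : ℂ) - y + ε * Complex.I‖ := fun y => by
    simpa [abs_of_pos hε] using Complex.abs_im_le_norm ((x : ℂ) - y + ε * Complex.I)
  have hden0 : ∀ y : ℝ, (x : ℂ) - y + ε * Complex.I ≠ 0 := fun y h =>
    hε.not_ge (by simpa [h] using hden y)
  simp_rw [div_eq_inv_mul]
  refine hf.ofReal.bdd_mul (c := ε⁻¹) ?_ (.of_forall fun y => ?_)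
  · exact (Continuous.inv₀ (by fun_prop) hden0).aestronglyMeasurable
  · rw [norm_inv]
    exact inv_anti₀ hε (hden y)

lemma im_integral_ofReal_div_sub_add_mul_I {f : ℝ → ℝ} (hf : Integrable f) (x : ℝ) {ε : ℝ}
    (hε : 0 < ε) :
    (∫ y : ℝ, (f y : ℂ) / ((x : ℂ) - y + ε * Complex.I)).im =
      -∫ y : ℝ, f y * (ε / ((x - y) ^ 2 + ε ^ 2)) :=
  calc _ = ∫ y : ℝ, ((f y : ℂ) / ((x : ℂ) - y + ε * Complex.I)).im :=
        (integral_im (integrable_ofReal_div_sub_add_mul_I hf x hε)).symm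
    _ = _ := by simp_rw [← Complex.ofReal_sub, ofReal_div_add_mul_I_im, integral_neg]

lemma integral_comp_add_mul_left (g : ℝ → ℝ) (x : ℝ) {ε : ℝ} (hε : 0 < ε) :
    ∫ u : ℝ, g (x + ε * u) = ε⁻¹ * ∫ y : ℝ, g y := by
  rw [Measure.integral_comp_mul_left (fun s => g (x + s)), integral_add_left_eq_self,
    abs_of_pos (inv_pos.mpr hε), smul_eq_mul]

lemma integral_mul_div_sq_add_sq_eq_integral_comp (f : ℝ → ℝ) (x : ℝ) {ε : ℝ} (hε : 0 < ε) :
    ∫ y : ℝ, f y * (ε / ((x - y) ^ 2 + ε ^ 2)) = ∫ u : ℝ, f (x + ε * u) / (1 + u ^ 2) := by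
  have hpt : ∀ u : ℝ, f (x + ε * u) / (1 + u ^ 2) =
      ε * (f (x + ε * u) * (ε / ((x - (x + ε * u)) ^ 2 + ε ^ 2))) := fun u => by
    field_simp
    ring
  simp_rw [hpt]
  rw [integral_const_mul,
    integral_comp_add_mul_left (fun y => f y * (ε / ((x - y) ^ 2 + ε ^ 2))) x hε,
    mul_inv_cancel_left₀ hε.ne']

lemma tendsto_integral_comp_add_mul_div_one_add_sq {f : ℝ → ℝ} {C : ℝ} (hfm : Measurable f)
    (hC : ∀ y, |f y| ≤ C) {x : ℝ} (hfx : ContinuousAt f x) :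
    Tendsto (fun ε : ℝ => ∫ u : ℝ, f (x + ε * u) / (1 + u ^ 2)) (𝓝 0)
      (𝓝 (Real.pi * f x)) := by
  have hlim : ∫ u : ℝ, f (x + 0 * u) / (1 + u ^ 2) = Real.pi * f x := by
    simp_rw [zero_mul, add_zero, div_eq_mul_inv, integral_const_mul, integral_univ_inv_one_add_sq]
    ring
  rw [← hlim]
  refine tendsto_integral_filter_of_dominated_convergence (fun u => C * (1 + u ^ 2)⁻¹)
    (.of_forall fun ε => ?_) (.of_forall fun ε => .of_forall fun u => ?_)
    (integrable_inv_one_add_sq.const_mul C) (.of_forall fun u => ?_)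
  · exact ((hfm.comp (by fun_prop)).div (by fun_prop)).aestronglyMeasurable
  · rw [norm_div, Real.norm_eq_abs, Real.norm_of_nonneg (by positivity), div_eq_mul_inv]
    exact mul_le_mul_of_nonneg_right (hC _) (by positivity)
  · have : Tendsto (fun ε : ℝ => x + ε * u) (𝓝 0) (𝓝 x) := by
      simpa using (Continuous.tendsto (f := fun ε : ℝ => x + ε * u) (by fun_prop) 0)
    simpa using (hfx.tendsto.comp this).div_const (1 + u ^ 2)

theorem sokhotsky_weierstrass_density_general (Φ : ℝ → ℝ)
    (hpos : ∀ y, 0 ≤ Φ y) (hint : Integrable Φ)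
    (hbdd : ∃ C : ℝ, ∀ y, Φ y ≤ C) (hcont : Continuous Φ) (x : ℝ) :
    Filter.Tendsto
      (fun ε : ℝ =>
        -(1 / Real.pi) * (∫ y : ℝ, (Φ y : ℂ) / ((x : ℂ) - y + ε * Complex.I)).im)
      (nhdsWithin 0 (Set.Ioi 0)) (nhds (Φ x)) := by
  obtain ⟨C, hC⟩ := hbdd
  have hpoisson : ∀ ε > 0,
      Real.pi⁻¹ * ∫ u : ℝ, Φ (x + ε * u) / (1 + u ^ 2) =
        -(1 / Real.pi) * (∫ y : ℝ, (Φ y : ℂ) / ((x : ℂ) - y + ε * Complex.I)).im := by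
    intro ε hε
    rw [im_integral_ofReal_div_sub_add_mul_I hint x hε,
      integral_mul_div_sq_add_sq_eq_integral_comp Φ x hε]
    ring
  have hlim : Tendsto (fun ε : ℝ => ∫ u : ℝ, Φ (x + ε * u) / (1 + u ^ 2)) (𝓝[>] 0)
      (𝓝 (Real.pi * Φ x)) :=
    (tendsto_integral_comp_add_mul_div_one_add_sq hcont.measurable
      (fun y => (abs_of_nonneg (hpos y)).trans_le (hC y)) hcont.continuousAt).mono_left
      nhdsWithin_le_nhds
  have hscaled := (hlim.const_mul Real.pi⁻¹).congr' (eventually_nhdsWithin_of_forall hpoisson)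
  rwa [inv_mul_cancel_left₀ Real.pi_ne_zero] at hscaled

/-- Sokhotsky–Weierstrass representation: for a bounded continuous probability
density `Φ` on `ℝ` and any point `x` (of continuity of `Φ`),
`Φ(x) = -(1/π) lim_{ε→0⁺} Im ∫ Φ(y)/(x - y + iε) dy`. -/
theorem sokhotsky_weierstrass_density (Φ : ℝ → ℝ)
    (hpos : ∀ y, 0 ≤ Φ y) (hint : Integrable Φ) (hnorm : ∫ y, Φ y = 1)
    (hbdd : ∃ C : ℝ, ∀ y, Φ y ≤ C) (hcont : Continuous Φ) (x : ℝ) :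
    Filter.Tendsto
      (fun ε : ℝ =>
        -(1 / Real.pi) * (∫ y : ℝ, (Φ y : ℂ) / ((x : ℂ) - y + ε * Complex.I)).im)
      (nhdsWithin 0 (Set.Ioi 0)) (nhds (Φ x)) :=
  sokhotsky_weierstrass_density_general Φ hpos hint hbdd hcont x
end

section
/- Let n ∈ N and let Φ_R be a continuous probability density on (0,1) of the radius of an isotropic random vector in dimension d = 2n+3, and let Φ_1 be the density of its first coordinate. Then Φ_1(√x) = (c_n Γ(n+1)/2) · I_-^{n+1}{Φ_R(√u) u^{-n-1}}(x) for x ∈ (0,1), where c_n = Γ(n+3/2)/(√π Γ(n+1)) and I_-^{n+1} is the right-sided Riemann–Liouville integral of order n+1. -/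
open MeasureTheory Set

/-- Right-sided Riemann–Liouville fractional integral of order `β`:
`I₋^β f (y) = (1/Γ(β)) ∫_y^∞ f(t) (t-y)^{β-1} dt`. -/
noncomputable def rlIntegral (β : ℝ) (f : ℝ → ℝ) (y : ℝ) : ℝ :=
  (Real.Gamma β)⁻¹ * ∫ t in Set.Ioi y, f t * (t - y) ^ (β - 1)

/-- For dimension `d = 2n+3`: if `ΦR` is a continuous probability density on `(0,1)`
of the radius of an isotropic random vector and `Φ1` is the density of its first
coordinate, i.e. `Φ1(x) = c_n ∫_0^1 (1-u²)^n (1/u) ΦR(x/u) du` with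
`c_n = Γ(n+3/2)/(√π Γ(n+1))`, then
`Φ1(√x) = (c_n Γ(n+1)/2) · I₋^{n+1}{ΦR(√u) u^{-n-1}}(x)` for `x ∈ (0,1)`. -/
theorem first_coord_density_rl_integral_odd (n : ℕ) (ΦR Φ1 : ℝ → ℝ)
    (hRpos : ∀ r, 0 ≤ ΦR r) (hRcont : ContinuousOn ΦR (Set.Ioo 0 1))
    (hRsupp : ∀ r, r ∉ Set.Ioo (0 : ℝ) 1 → ΦR r = 0)
    (hRnorm : ∫ r, ΦR r = 1)
    (hrel : ∀ x : ℝ, 0 < x →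
      Φ1 x = (Real.Gamma ((n : ℝ) + 3 / 2) /
          (Real.sqrt Real.pi * Real.Gamma ((n : ℝ) + 1))) *
        ∫ u in Set.Ioc (0 : ℝ) 1, (1 - u ^ 2) ^ n * (1 / u) * ΦR (x / u)) :
    ∀ x ∈ Set.Ioo (0 : ℝ) 1,
      Φ1 (Real.sqrt x) =
        (Real.Gamma ((n : ℝ) + 3 / 2) /
            (Real.sqrt Real.pi * Real.Gamma ((n : ℝ) + 1))) *
          Real.Gamma ((n : ℝ) + 1) / 2 *
          rlIntegral ((n : ℝ) + 1)
            (fun u => ΦR (Real.sqrt u) * u ^ (-(n : ℝ) - 1)) x := by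
  intro x hx
  obtain ⟨hx0, hx1⟩ := hx
  have hΓ : Real.Gamma ((n : ℝ) + 1) ≠ 0 :=
    (Real.Gamma_pos_of_pos (by positivity)).ne'
  set sx := Real.sqrt x with hsx
  have hsx0 : 0 < sx := Real.sqrt_pos.2 hx0
  have hsx1 : sx < 1 := by
    rw [hsx, show (1:ℝ) = Real.sqrt 1 by simp]
    exact Real.sqrt_lt_sqrt hx0.le hx1
  have hsxsq : sx ^ 2 = x := Real.sq_sqrt hx0.le
  set g : ℝ → ℝ := fun u => (1 - u ^ 2) ^ n * (1 / u) * ΦR (sx / u) with hg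
  set F : ℝ → ℝ := fun t => ΦR (Real.sqrt t) * t ^ (-(n : ℝ) - 1) * (t - x) ^ ((n : ℝ) + 1 - 1)
    with hF
  -- g vanishes off (sx, 1)
  have hgzero : ∀ u ∈ Set.Ioo (0:ℝ) 1 \ Set.Ioo sx 1, g u = 0 := by
    rintro u ⟨⟨hu0, hu1⟩, hnot⟩
    have hule : u ≤ sx := by
      by_contra h
      exact hnot ⟨lt_of_not_ge h, hu1⟩
    have h1le : 1 ≤ sx / u := (one_le_div hu0).2 hule
    have : ΦR (sx / u) = 0 := hRsupp _ (fun hmem => absurd hmem.2 (not_lt.2 h1le))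
    simp [hg, this]
  -- Step B : reduce LHS integral to Ioo sx 1
  have hB : (∫ u in Set.Ioc (0:ℝ) 1, g u) = ∫ u in Set.Ioo sx 1, g u := by
    rw [MeasureTheory.setIntegral_congr_set (MeasureTheory.Ioo_ae_eq_Ioc).symm]
    exact MeasureTheory.setIntegral_eq_of_subset_of_forall_diff_eq_zero measurableSet_Ioo
      (Set.Ioo_subset_Ioo hsx0.le le_rfl) hgzero
  -- F vanishes off (x, 1)
  have hFzero : ∀ t ∈ Set.Ioi x \ Set.Ioo x 1, F t = 0 := by
    rintro t ⟨ht, hnot⟩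
    have h1le : (1:ℝ) ≤ t := by
      by_contra h
      exact hnot ⟨ht, lt_of_not_ge h⟩
    have h1 : (1:ℝ) ≤ Real.sqrt t := by
      rw [show (1:ℝ) = Real.sqrt 1 by simp]
      exact Real.sqrt_le_sqrt h1le
    have : ΦR (Real.sqrt t) = 0 := hRsupp _ (fun hmem => absurd hmem.2 (not_lt.2 h1))
    simp [hF, this]
  have hD : (∫ t in Set.Ioi x, F t) = ∫ t in Set.Ioo x 1, F t :=
    MeasureTheory.setIntegral_eq_of_subset_of_forall_diff_eq_zero measurableSet_Ioi
      (fun t ht => ht.1) hFzero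
  -- change of variables ψ u = x / u ^ 2 on (sx, 1)
  set ψ : ℝ → ℝ := fun u => x / u ^ 2 with hψ
  set ψ' : ℝ → ℝ := fun u => -2 * x / u ^ 3 with hψ'
  have hderiv : ∀ u ∈ Set.Ioo sx 1, HasDerivWithinAt ψ (ψ' u) (Set.Ioo sx 1) u := by
    intro u hu
    have hu0 : u ≠ 0 := (hsx0.trans hu.1).ne'
    have h2 : HasDerivAt (fun u : ℝ => u ^ 2) (2 * u ^ 1) u := hasDerivAt_pow 2 u
    have h3 : HasDerivAt ψ ((0 * u ^ 2 - x * (2 * u ^ 1)) / (u ^ 2) ^ 2) u :=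
      (hasDerivAt_const u x).div h2 (pow_ne_zero 2 hu0)
    have h1 : HasDerivAt ψ (ψ' u) u := by
      convert h3 using 1
      rw [hψ']; field_simp; ring
    exact h1.hasDerivWithinAt
  have hinj : Set.InjOn ψ (Set.Ioo sx 1) := by
    intro a ha b hb hab
    have ha0 : 0 < a := hsx0.trans ha.1
    have hb0 : 0 < b := hsx0.trans hb.1
    have h2 : a ^ 2 = b ^ 2 := by
      have h : x / a ^ 2 = x / b ^ 2 := hab
      rw [div_eq_div_iff (by positivity) (by positivity)] at h
      have := mul_left_cancel₀ hx0.ne' (by linarith : x * (b ^ 2) = x * (a ^ 2))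
      linarith
    calc a = Real.sqrt (a ^ 2) := (Real.sqrt_sq ha0.le).symm
      _ = Real.sqrt (b ^ 2) := by rw [h2]
      _ = b := Real.sqrt_sq hb0.le
  have himg : ψ '' Set.Ioo sx 1 = Set.Ioo x 1 := by
    ext t
    constructor
    · rintro ⟨u, ⟨hu1, hu2⟩, rfl⟩
      have hu0 : 0 < u := hsx0.trans hu1
      have husq : x < u ^ 2 := by nlinarith
      have hu2lt : u ^ 2 < 1 := by nlinarith
      constructor
      · show x < x / u ^ 2
        rw [lt_div_iff₀ (by positivity)]
        nlinarith [mul_lt_mul_of_pos_left hu2lt hx0]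
      · show x / u ^ 2 < 1
        rw [div_lt_one (by positivity)]; exact husq
    · rintro ⟨ht1, ht2⟩
      have ht0 : 0 < t := hx0.trans ht1
      refine ⟨Real.sqrt (x / t), ⟨?_, ?_⟩, ?_⟩
      · rw [hsx]
        apply Real.sqrt_lt_sqrt hx0.le
        rw [lt_div_iff₀ ht0]
        nlinarith [mul_lt_mul_of_pos_left ht2 hx0]
      · calc Real.sqrt (x / t) < Real.sqrt 1 :=
              Real.sqrt_lt_sqrt (by positivity) ((div_lt_one ht0).2 ht1)
          _ = 1 := Real.sqrt_one
      · show x / Real.sqrt (x / t) ^ 2 = t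
        rw [Real.sq_sqrt (by positivity)]
        field_simp
  have hchg : (∫ t in Set.Ioo x 1, F t) =
      ∫ u in Set.Ioo sx 1, |ψ' u| • F (ψ u) := by
    rw [← himg]
    exact MeasureTheory.integral_image_eq_integral_abs_deriv_smul measurableSet_Ioo hderiv hinj F
  -- pointwise identity on (sx, 1)
  have hpt : ∀ u ∈ Set.Ioo sx 1, |ψ' u| • F (ψ u) = 2 * g u := by
    rintro u ⟨hu1, hu2⟩
    have hu0 : 0 < u := hsx0.trans hu1
    have husq : x < u ^ 2 := by nlinarith
    have hψu0 : 0 < ψ u := by rw [hψ]; positivity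
    have habs : |ψ' u| = 2 * x / u ^ 3 := by
      rw [hψ', abs_of_neg (by
        apply div_neg_of_neg_of_pos (by linarith) (by positivity))]
      ring
    have hsqrt : Real.sqrt (ψ u) = sx / u := by
      rw [hψ, hsx, Real.sqrt_div hx0.le, Real.sqrt_sq hu0.le]
    have hexp : (-(n:ℝ) - 1) = -((n + 1 : ℕ) : ℝ) := by push_cast; ring
    have hrpow1 : (ψ u) ^ (-(n:ℝ) - 1) = ((ψ u) ^ (n + 1 : ℕ))⁻¹ := by
      rw [hexp, Real.rpow_neg hψu0.le, Real.rpow_natCast]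
    have hexp2 : ((n:ℝ) + 1 - 1) = ((n : ℕ) : ℝ) := by push_cast; ring
    have hrpow2 : (ψ u - x) ^ ((n:ℝ) + 1 - 1) = (ψ u - x) ^ (n : ℕ) := by
      rw [hexp2, Real.rpow_natCast]
    rw [smul_eq_mul, hF, habs]
    simp only [hsqrt, hrpow1, hrpow2]
    rw [hg, hψ]
    have hsub : x / u ^ 2 - x = x * (1 - u ^ 2) / u ^ 2 := by
      field_simp
    rw [hsub]; simp only [div_pow, mul_pow]
    field_simp
    ring
  have hptint : (∫ u in Set.Ioo sx 1, |ψ' u| • F (ψ u)) = 2 * ∫ u in Set.Ioo sx 1, g u := by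
    rw [MeasureTheory.setIntegral_congr_fun measurableSet_Ioo hpt,
      MeasureTheory.integral_const_mul]
  rw [hrel sx hsx0]
  have hL : (∫ u in Set.Ioc (0:ℝ) 1, (1 - u ^ 2) ^ n * (1 / u) * ΦR (sx / u))
      = ∫ u in Set.Ioo sx 1, g u := hB
  rw [hL]
  show _ = _ * Real.Gamma ((n : ℝ) + 1) / 2 *
      ((Real.Gamma ((n:ℝ) + 1))⁻¹ * ∫ t in Set.Ioi x,
        (ΦR (Real.sqrt t) * t ^ (-(n : ℝ) - 1)) * (t - x) ^ ((n:ℝ) + 1 - 1))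
  have hFeq : (∫ t in Set.Ioi x,
      (ΦR (Real.sqrt t) * t ^ (-(n : ℝ) - 1)) * (t - x) ^ ((n:ℝ) + 1 - 1))
      = ∫ t in Set.Ioi x, F t := by
    rfl
  rw [hFeq, hD, hchg, hptint]
  field_simp
end

section
/- Under the hypotheses of the previous relation (d = 2n+3), if Φ_1(√r) is (n+1)-times continuously differentiable on (0,1), then the radial density is recovered as Φ_R(√r) = (2√π / Γ(n+3/2)) r^{n+1} (-1)^{n+1} (d^{n+1}/dr^{n+1}) Φ_1(√r) for r ∈ (0,1). -/
/-!
The substitution `s = r / u²` turns the relation into `Φ₁(√r) = (c_n / 2) J_n(r)`, where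
`J_k(y) = ∫_y^1 (s - y)^k h(s) ds` and `h(s) = s^{-(n+1)} Φ_R(√s)`. Differentiating under the
integral, `J_{k+1}' = -(k + 1) J_k` because the boundary term `(s - y)^{k+1} h(s)` vanishes at
`s = y`, and `J_0' = -h` by the fundamental theorem of calculus. Hence `n + 1` derivatives of `J_n`
leave `(-1)^{n+1} n! h`, and `c_n n! = Γ(n + 3/2) / √π` gives the constant.
-/

open MeasureTheory Set

section IntegralFromVariableLowerLimit

variable {h : ℝ → ℝ} {b : ℝ} {U : Set ℝ}

theorem intervalIntegral_sum_const_mul {ι : Type*} (t : Finset ι) (c : ι → ℝ)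
    {f : ι → ℝ → ℝ} {a : ℝ}
    (hf : ∀ i ∈ t, IntervalIntegrable (f i) volume a b) :
    ∫ s in a..b, ∑ i ∈ t, c i * f i s = ∑ i ∈ t, c i * ∫ s in a..b, f i s := by
  rw [intervalIntegral.integral_finsetSum fun i hi => (hf i hi).const_mul _]
  simp only [intervalIntegral.integral_const_mul]

theorem hasDerivAt_integral_sum_mul_mul {ι : Type*} (t : Finset ι) {p q : ι → ℝ → ℝ}
    {p' : ι → ℝ} {x : ℝ} (hp : ∀ i ∈ t, HasDerivAt (p i) (p' i) x)
    (hq : ∀ i ∈ t, Continuous (q i)) (hU : IsOpen U) (hx : x ∈ U) (hcont : ContinuousOn h U)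
    (hint : ∀ y ∈ U, IntervalIntegrable h volume y b) :
    HasDerivAt (fun y => ∫ s in y..b, ∑ i ∈ t, p i y * (q i s * h s))
      ((∫ s in x..b, ∑ i ∈ t, p' i * (q i s * h s)) - (∑ i ∈ t, p i x * q i x) * h x)
      x := by
  have hqh : ∀ y ∈ U, ∀ i ∈ t, IntervalIntegrable (fun s => q i s * h s) volume y b :=
    fun y hy i hi => (hint y hy).continuousOn_mul (hq i hi).continuousOn
  have hderiv : HasDerivAt (fun y => ∑ i ∈ t, p i y * ∫ s in y..b, q i s * h s)
      (∑ i ∈ t, (p' i * (∫ s in x..b, q i s * h s) + p i x * -(q i x * h x))) x :=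
    HasDerivAt.fun_sum fun i hi => (hp i hi).fun_mul <|
      intervalIntegral.integral_hasDerivAt_left (hqh x hx i hi)
        (((hq i hi).continuousOn.mul hcont).stronglyMeasurableAtFilter hU x hx)
        ((hq i hi).continuousAt.mul (hcont.continuousAt (hU.mem_nhds hx)))
  refine (hderiv.congr_of_eventuallyEq (Filter.eventually_of_mem (hU.mem_nhds hx)
    fun y hy => intervalIntegral_sum_const_mul t _ (hqh y hy))).congr_deriv ?_
  rw [intervalIntegral_sum_const_mul t _ (hqh x hx), Finset.sum_add_distrib, Finset.sum_mul,
    sub_eq_add_neg, ← Finset.sum_neg_distrib]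
  simp only [mul_neg, mul_assoc]

theorem sub_pow_eq_sum {R : Type*} [CommRing R] (s y : R) (m : ℕ) :
    (s - y) ^ m = ∑ i ∈ Finset.range (m + 1), (-y) ^ (m - i) * m.choose i * s ^ i := by
  rw [sub_eq_add_neg, add_pow]
  exact Finset.sum_congr rfl fun i _ => by ring

theorem hasDerivAt_integral_sub_pow_succ_mul (k : ℕ) {x : ℝ} (hU : IsOpen U) (hx : x ∈ U)
    (hcont : ContinuousOn h U) (hint : ∀ y ∈ U, IntervalIntegrable h volume y b) :
    HasDerivAt (fun y => ∫ s in y..b, (s - y) ^ (k + 1) * h s)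
      (-((k + 1) * ∫ s in x..b, (s - x) ^ k * h s)) x := by
  set t := Finset.range (k + 2)
  set p : ℕ → ℝ → ℝ := fun i y => (-y) ^ (k + 1 - i) * (k + 1).choose i
  obtain ⟨p', hp⟩ : ∃ p' : ℕ → ℝ, ∀ i ∈ t, HasDerivAt (p i) (p' i) x :=
    ⟨_, fun i _ => ((hasDerivAt_id x).neg.pow _).mul_const _⟩
  have hkernel (y s : ℝ) : (s - y) ^ (k + 1) = ∑ i ∈ t, p i y * s ^ i :=
    sub_pow_eq_sum s y (k + 1)
  -- both sides are the derivative of `y ↦ (s - y) ^ (k + 1)` at `x`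
  have hp' (s : ℝ) : ∑ i ∈ t, p' i * s ^ i = -((k + 1) * (s - x) ^ k) := by
    have hsum : HasDerivAt (fun y => ∑ i ∈ t, p i y * s ^ i) (∑ i ∈ t, p' i * s ^ i) x :=
      HasDerivAt.fun_sum fun i hi => (hp i hi).mul_const _
    have hpow : HasDerivAt (fun y => (s - y) ^ (k + 1)) (-((k + 1) * (s - x) ^ k)) x := by
      simpa using ((hasDerivAt_id x).const_sub s).fun_pow (k + 1)
    exact hsum.unique (by simpa only [← hkernel] using hpow)
  have key := hasDerivAt_integral_sum_mul_mul t hp (fun i _ => continuous_pow i) hU hx hcont hint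
  simp only [← mul_assoc, ← Finset.sum_mul, ← hkernel, hp'] at key
  simpa [mul_assoc, intervalIntegral.integral_const_mul] using key

theorem iteratedDerivWithin_integral_sub_pow_mul (hU : IsOpen U) (hcont : ContinuousOn h U)
    (hint : ∀ y ∈ U, IntervalIntegrable h volume y b) (m k : ℕ) :
    EqOn (iteratedDerivWithin m (fun y => ∫ s in y..b, (s - y) ^ (k + m) * h s) U)
      (fun y => (-1) ^ m * (k + m).descFactorial m * ∫ s in y..b, (s - y) ^ k * h s) U := by
  induction m generalizing k with
  | zero => intro y _; simp
  | succ m ih =>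
    intro x hx
    rw [iteratedDerivWithin_succ, show k + (m + 1) = k + 1 + m by omega,
      derivWithin_congr (ih (k + 1)) (ih (k + 1) hx), derivWithin_of_isOpen hU hx,
      ((hasDerivAt_integral_sub_pow_succ_mul k hU hx hcont hint).const_mul _).deriv,
      Nat.descFactorial_succ, Nat.add_sub_cancel]
    push_cast
    ring

theorem iteratedDerivWithin_succ_integral_sub_pow_mul (hU : IsOpen U) (hcont : ContinuousOn h U)
    (hint : ∀ y ∈ U, IntervalIntegrable h volume y b) (n : ℕ) {x : ℝ} (hx : x ∈ U) :
    iteratedDerivWithin (n + 1) (fun y => ∫ s in y..b, (s - y) ^ n * h s) U x =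
      (-1) ^ (n + 1) * n.factorial * h x := by
  have hJ0 := intervalIntegral.integral_hasDerivAt_left (hint x hx)
    (hcont.stronglyMeasurableAtFilter hU x hx) (hcont.continuousAt (hU.mem_nhds hx))
  have hn := iteratedDerivWithin_integral_sub_pow_mul hU hcont hint n 0
  simp only [zero_add, pow_zero, one_mul, Nat.descFactorial_self] at hn
  rw [iteratedDerivWithin_succ, derivWithin_congr hn (hn hx), derivWithin_of_isOpen hU hx,
    (hJ0.const_mul _).deriv]
  ring

end IntegralFromVariableLowerLimit

theorem integrableOn_Ioi_comp_sqrt_div_sqrt {f : ℝ → ℝ} (hf : IntegrableOn f (Ioi 0)) :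
    IntegrableOn (fun s => f (√s) / √s) (Ioi 0) := by
  refine ((integrableOn_Ioi_comp_rpow_iff' f (p := 1 / 2) (by norm_num)).2 hf).congr_fun
    (fun s hs => ?_) measurableSet_Ioi
  rw [show (1 / 2 : ℝ) - 1 = -(1 / 2) by norm_num]
  dsimp only
  rw [Real.rpow_neg (le_of_lt hs), ← Real.sqrt_eq_rpow, smul_eq_mul, div_eq_inv_mul]

theorem intervalIntegrable_inv_pow_mul_comp_sqrt (n : ℕ) {f : ℝ → ℝ}
    (hf : IntegrableOn f (Ioi 0))
    {a b : ℝ} (ha : 0 < a) (hb : 0 < b) :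
    IntervalIntegrable (fun s => (s ^ (n + 1))⁻¹ * f (√s)) volume a b := by
  have hpos : uIcc a b ⊆ Ioi 0 := fun s hs => lt_of_lt_of_le (lt_min ha hb) hs.1
  have hint : IntervalIntegrable (fun s => f (√s) / √s) volume a b :=
    intervalIntegrable_iff.2 <| (integrableOn_Ioi_comp_sqrt_div_sqrt hf).mono_set <|
      uIoc_subset_uIcc.trans hpos
  refine (hint.continuousOn_mul (g := fun s => (s ^ (n + 1))⁻¹ * √s) ?_).congr fun s hs => ?_
  · exact ((continuousOn_pow _).inv₀ fun s hs => pow_ne_zero _ (hpos hs).ne').mul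
      Real.continuous_sqrt.continuousOn
  · have : √s ≠ 0 := (Real.sqrt_pos.2 (hpos (uIoc_subset_uIcc hs))).ne'
    field_simp

theorem image_const_div_sq_Ioc_zero_one {r : ℝ} (hr : 0 < r) :
    (fun u : ℝ => r / u ^ 2) '' Ioc 0 1 = Ici r := by
  ext s
  constructor
  · rintro ⟨u, ⟨hu0, hu1⟩, rfl⟩
    exact (le_div_iff₀ (by positivity)).2 <|
      mul_le_of_le_one_right hr.le (pow_le_one₀ hu0.le hu1)
  · intro hs
    have hs0 : 0 < s := hr.trans_le hs
    refine ⟨√(r / s), ⟨by positivity, Real.sqrt_le_one.2 ((div_le_one hs0).2 hs)⟩, ?_⟩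
    dsimp only
    rw [Real.sq_sqrt (by positivity)]
    field_simp

theorem integral_comp_const_div_sq {r : ℝ} (hr : 0 < r) (g : ℝ → ℝ) :
    ∫ u in Ioc 0 1, 2 * r / u ^ 3 * g (r / u ^ 2) = ∫ s in Ioi r, g s := by
  have hderiv : ∀ u ∈ Ioc (0 : ℝ) 1,
      HasDerivWithinAt (fun u => r / u ^ 2) (-(2 * r / u ^ 3)) (Ioc 0 1) u := fun u hu => by
    have hu : u ≠ 0 := hu.1.ne'
    refine (((hasDerivAt_const u r).div (hasDerivAt_pow 2 u) (pow_ne_zero 2 hu)).congr_deriv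
      ?_).hasDerivWithinAt
    field_simp
    ring
  have hinj : InjOn (fun u : ℝ => r / u ^ 2) (Ioc 0 1) := fun u hu v hv huv => by
    have : (u ^ 2)⁻¹ = (v ^ 2)⁻¹ :=
      mul_left_cancel₀ hr.ne' (by simpa only [div_eq_mul_inv] using huv)
    exact (pow_left_inj₀ hu.1.le hv.1.le two_ne_zero).1 (inv_inj.1 this)
  rw [setIntegral_congr_set Ioi_ae_eq_Ici, ← image_const_div_sq_Ioc_zero_one hr,
    integral_image_eq_integral_abs_deriv_smul measurableSet_Ioc hderiv hinj]
  refine setIntegral_congr_fun measurableSet_Ioc fun u hu => ?_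
  rw [abs_neg, abs_of_pos (by have := hu.1; positivity), smul_eq_mul]

theorem integral_Ioc_one_sub_sq_pow_mul_comp_div {f : ℝ → ℝ} (hf : ∀ t, 1 < t → f t = 0)
    (n : ℕ) {r : ℝ} (hr : 0 < r) (hr1 : r ≤ 1) :
    ∫ u in Ioc 0 1, (1 - u ^ 2) ^ n * (1 / u) * f (√r / u) =
      1 / 2 * ∫ s in r..1, (s - r) ^ n * ((s ^ (n + 1))⁻¹ * f (√s)) := by
  set g := fun s => (s - r) ^ n * ((s ^ (n + 1))⁻¹ * f (√s))
  have hsubst : EqOn (fun u => (1 - u ^ 2) ^ n * (1 / u) * f (√r / u))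
      (fun u => 1 / 2 * (2 * r / u ^ 3 * g (r / u ^ 2))) (Ioc 0 1) := fun u hu => by
    have hu : 0 < u := hu.1
    have hsqrt : √(r / u ^ 2) = √r / u := by
      rw [Real.sqrt_div' _ (sq_nonneg u), Real.sqrt_sq hu.le]
    have hsub : r / u ^ 2 - r = r / u ^ 2 * (1 - u ^ 2) := by field_simp
    simp only [g, hsqrt, hsub, mul_pow, div_pow]
    field_simp
    ring
  have hvanish : ∀ s ∈ Ioi r \ Ioc r 1, g s = 0 := fun s hs => by
    have hs1 : 1 < s := not_le.1 fun h => hs.2 ⟨hs.1, h⟩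
    simp [g, hf _ ((Real.lt_sqrt zero_le_one).2 (by simpa using hs1))]
  rw [setIntegral_congr_fun measurableSet_Ioc hsubst, integral_const_mul,
    integral_comp_const_div_sq hr, intervalIntegral.integral_of_le hr1,
    setIntegral_eq_of_subset_of_forall_sdiff_eq_zero measurableSet_Ioi Ioc_subset_Ioi_self hvanish]

theorem radial_density_from_first_coord_odd_general (n : ℕ) (ΦR Φ1 : ℝ → ℝ)
    (hRcont : ContinuousOn ΦR (Set.Ioo 0 1))
    (hRsupp : ∀ r, r ∉ Set.Ioo (0 : ℝ) 1 → ΦR r = 0)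
    (hRnorm : ∫ r, ΦR r = 1)
    (hrel : ∀ x : ℝ, 0 < x →
      Φ1 x = (Real.Gamma ((n : ℝ) + 3 / 2) /
          (Real.sqrt Real.pi * Real.Gamma ((n : ℝ) + 1))) *
        ∫ u in Set.Ioc (0 : ℝ) 1, (1 - u ^ 2) ^ n * (1 / u) * ΦR (x / u)) :
    ∀ r ∈ Set.Ioo (0 : ℝ) 1,
      ΦR (Real.sqrt r) =
        (2 * Real.sqrt Real.pi / Real.Gamma ((n : ℝ) + 3 / 2)) * r ^ (n + 1) *
          (-1 : ℝ) ^ (n + 1) *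
          iteratedDerivWithin (n + 1) (fun r => Φ1 (Real.sqrt r))
            (Set.Ioo 0 1) r := by
  intro r hr
  have hΦR : Integrable ΦR := .of_integral_ne_zero (by rw [hRnorm]; exact one_ne_zero)
  set c := Real.Gamma ((n : ℝ) + 3 / 2) / (Real.sqrt Real.pi * Real.Gamma ((n : ℝ) + 1))
  set h := fun s => c / 2 * ((s ^ (n + 1))⁻¹ * ΦR (√s))
  have hcont : ContinuousOn h (Ioo 0 1) :=
    continuousOn_const.mul <|
      ((continuousOn_pow _).inv₀ fun s hs => pow_ne_zero _ hs.1.ne').mul <|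
      hRcont.comp Real.continuous_sqrt.continuousOn fun s hs =>
        ⟨Real.sqrt_pos.2 hs.1, by simpa using Real.sqrt_lt_sqrt hs.1.le hs.2⟩
  have hint : ∀ y ∈ Ioo (0 : ℝ) 1, IntervalIntegrable h volume y 1 := fun y hy =>
    (intervalIntegrable_inv_pow_mul_comp_sqrt n hΦR.integrableOn hy.1 one_pos).const_mul _
  have hΦ1 : EqOn (fun x => Φ1 √x) (fun y => ∫ s in y..1, (s - y) ^ n * h s) (Ioo 0 1) :=
    fun x hx => by
      dsimp only
      rw [hrel _ (Real.sqrt_pos.2 hx.1), integral_Ioc_one_sub_sq_pow_mul_comp_div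
        (fun t ht => hRsupp t fun hmem => lt_asymm ht hmem.2) n hx.1 hx.2.le]
      simp only [h, mul_left_comm _ (c / 2), intervalIntegral.integral_const_mul]
      ring
  rw [iteratedDerivWithin_congr hΦ1 hr,
    iteratedDerivWithin_succ_integral_sub_pow_mul isOpen_Ioo hcont hint n hr]
  have hsign : ((-1 : ℝ) ^ (n + 1)) ^ 2 = 1 := by rw [← pow_mul, pow_mul', neg_one_sq, one_pow]
  have hr0 : r ≠ 0 := hr.1.ne'
  simp only [h, c, Real.Gamma_nat_eq_factorial]
  field_simp
  rw [hsign, mul_one]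

/-- For `d = 2n+3`: if `Φ1(x) = c_n ∫_0^1 (1-u²)^n (1/u) ΦR(x/u) du` with
`c_n = Γ(n+3/2)/(√π Γ(n+1))`, `ΦR` a continuous probability density supported on
`(0,1)`, and `r ↦ Φ1(√r)` is `(n+1)`-times continuously differentiable on `(0,1)`,
then `ΦR(√r) = (2√π/Γ(n+3/2)) r^{n+1} (-1)^{n+1} (d^{n+1}/dr^{n+1}) Φ1(√r)`
for `r ∈ (0,1)`. -/
theorem radial_density_from_first_coord_odd (n : ℕ) (ΦR Φ1 : ℝ → ℝ)
    (hRpos : ∀ r, 0 ≤ ΦR r) (hRcont : ContinuousOn ΦR (Set.Ioo 0 1))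
    (hRsupp : ∀ r, r ∉ Set.Ioo (0 : ℝ) 1 → ΦR r = 0)
    (hRnorm : ∫ r, ΦR r = 1)
    (hrel : ∀ x : ℝ, 0 < x →
      Φ1 x = (Real.Gamma ((n : ℝ) + 3 / 2) /
          (Real.sqrt Real.pi * Real.Gamma ((n : ℝ) + 1))) *
        ∫ u in Set.Ioc (0 : ℝ) 1, (1 - u ^ 2) ^ n * (1 / u) * ΦR (x / u))
    (hsmooth : ContDiffOn ℝ (n + 1 : ℕ)
      (fun r => Φ1 (Real.sqrt r)) (Set.Ioo 0 1)) :
    ∀ r ∈ Set.Ioo (0 : ℝ) 1,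
      ΦR (Real.sqrt r) =
        (2 * Real.sqrt Real.pi / Real.Gamma ((n : ℝ) + 3 / 2)) * r ^ (n + 1) *
          (-1 : ℝ) ^ (n + 1) *
          iteratedDerivWithin (n + 1) (fun r => Φ1 (Real.sqrt r))
            (Set.Ioo 0 1) r :=
  radial_density_from_first_coord_odd_general n ΦR Φ1 hRcont hRsupp hRnorm hrel
end

section
/- For β > -1, n ∈ N, and real ξ with |ξ| < 1, one has ∫_{-1}^1 (1-ξu)^β (1-u^2)^{n-1/2} du = B(1/2, n+1/2) · ₂F₁(-β/2, (1-β)/2; n+1; ξ²). -/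
/-!
Expand `(1 - ξu)^β = ∑ₖ (-β)ₖ/k! (ξu)ᵏ`. For `|ξ| < 1` and `|u| ≤ 1` the terms are dominated
by `|(-β)ₖ/k!| |ξ|ᵏ` times the integrable weight `(1 - u²)^(n - 1/2)`, so the series can be
integrated termwise. The odd moments of the even weight vanish, and the substitution `t = u²` turns
the even ones into Beta integrals: `∫_{-1}^1 u^{2m} (1 - u²)^α du = B(m + 1/2, α + 1)`. Finally the
duplication formulas `(a)_{2m} = 4^m (a/2)_m ((a+1)/2)_m` and `(2m)! = 4^m (1/2)_m m!`, together
with `Γ(x + m) = Γ(x) (x)_m`, turn the coefficient of `ξ^{2m}` into `B(1/2, n + 1/2)` times the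
`m`-th coefficient of `₂F₁(-β/2, (1-β)/2; n+1; ·)`.
-/

open MeasureTheory Set

/-- The Gauss hypergeometric function `₂F₁(a,b;c;x)` defined by its power series. -/
noncomputable def hyp2F1 (a b c x : ℝ) : ℝ :=
  ∑' k : ℕ, ((∏ i ∈ Finset.range k, (a + i)) * (∏ i ∈ Finset.range k, (b + i)) /
    ((∏ i ∈ Finset.range k, (c + i)) * (Nat.factorial k))) * x ^ k

open scoped Nat

noncomputable def oneSubRpowCoeff (β : ℝ) (k : ℕ) : ℝ :=
  (∏ i ∈ Finset.range k, (-β + i)) / k !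

theorem oneSubRpowCoeff_eq_choose_mul_neg_one_pow (β : ℝ) (k : ℕ) :
    oneSubRpowCoeff β k = Ring.choose β k * (-1) ^ k := by
  symm
  rw [oneSubRpowCoeff, Ring.choose_eq_smul, smul_eq_mul, ← Polynomial.aeval_eq_smeval,
    Polynomial.aeval_def, Polynomial.eval₂_eq_eval_map, descPochhammer_map,
    descPochhammer_eval_eq_prod_range, div_eq_inv_mul, mul_assoc,
    show (-1 : ℝ) ^ k = ∏ _i ∈ Finset.range k, (-1 : ℝ) by simp, ← Finset.prod_mul_distrib]
  exact congrArg _ (Finset.prod_congr rfl fun i _ => by ring)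

theorem binomialSeries_apply_neg (β x : ℝ) (k : ℕ) :
    binomialSeries ℝ β k (fun _ => -x) = oneSubRpowCoeff β k * x ^ k := by
  rw [binomialSeries_apply, List.ofFn_const, List.prod_replicate, smul_eq_mul, neg_pow,
    oneSubRpowCoeff_eq_choose_mul_neg_one_pow, mul_assoc]

theorem hasSum_oneSubRpowCoeff_mul_pow (β : ℝ) {x : ℝ} (hx : |x| < 1) :
    HasSum (fun k => oneSubRpowCoeff β k * x ^ k) ((1 - x) ^ β) := by
  have := (Real.one_add_rpow_hasFPowerSeriesOnBall_zero (a := β)).hasSum (y := -x)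
    (by simpa [edist_dist] using hx)
  rwa [zero_add, ← sub_eq_add_neg, funext (binomialSeries_apply_neg β x)] at this

theorem summable_abs_oneSubRpowCoeff_mul_pow (β : ℝ) {x : ℝ} (hx : |x| < 1) :
    Summable (fun k => |oneSubRpowCoeff β k * x ^ k|) := by
  have hr := (Real.one_add_rpow_hasFPowerSeriesOnBall_zero (a := β)).r_le
  simpa only [binomialSeries_apply_neg, Real.norm_eq_abs] using
    (binomialSeries ℝ β).summable_norm_apply (x := -x)
      (Metric.eball_subset_eball hr (by simpa [edist_dist] using hx))

theorem hasSum_integral_one_sub_mul_rpow_mul {w : ℝ → ℝ}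
    (hw : IntervalIntegrable w volume (-1) 1) (β : ℝ) {ξ : ℝ} (hξ : |ξ| < 1) :
    HasSum (fun k => oneSubRpowCoeff β k * ξ ^ k * ∫ u in -1..1, u ^ k * w u)
      (∫ u in -1..1, (1 - ξ * u) ^ β * w u) := by
  have habs {u : ℝ} (hu : u ∈ uIoc (-1 : ℝ) 1) : |u| ≤ 1 := by
    rw [uIoc_of_le (by norm_num)] at hu
    exact abs_le.mpr ⟨hu.1.le, hu.2⟩
  simp_rw [← intervalIntegral.integral_const_mul]
  refine intervalIntegral.hasSum_integral_of_dominated_convergence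
    (fun k u => |oneSubRpowCoeff β k * ξ ^ k| * |w u|) (fun k => ?_)
    (fun k => ae_of_all _ fun u hu => ?_) (ae_of_all _ fun u _ => ?_) ?_
    (ae_of_all _ fun u hu => ?_)
  · exact ((hw.continuousOn_mul (continuous_pow k).continuousOn).const_mul
      _).def'.aestronglyMeasurable
  · rw [Real.norm_eq_abs, abs_mul, abs_mul (u ^ k), abs_pow u]
    exact mul_le_mul_of_nonneg_left
      (mul_le_of_le_one_left (abs_nonneg _) (pow_le_one₀ (abs_nonneg u) (habs hu))) (abs_nonneg _)
  · exact (summable_abs_oneSubRpowCoeff_mul_pow β hξ).mul_right _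
  · simp_rw [tsum_mul_right]
    exact hw.abs.const_mul _
  · have hξu : |ξ * u| < 1 := by
      rw [abs_mul]
      exact (mul_le_of_le_one_right (abs_nonneg ξ) (habs hu)).trans_lt hξ
    refine ((hasSum_oneSubRpowCoeff_mul_pow β hξu).mul_right (w u)).congr_fun fun k => ?_
    rw [mul_pow]
    ring

theorem HasSum.comp_two_mul_of_odd_eq_zero {M : Type*} [AddCommMonoid M] [TopologicalSpace M]
    {f : ℕ → M} {a : M} (hf : HasSum f a) (hodd : ∀ m, f (2 * m + 1) = 0) :
    HasSum (fun m => f (2 * m)) a := by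
  refine (Function.Injective.hasSum_iff (mul_right_injective₀ two_ne_zero) fun k hk => ?_).mpr hf
  obtain ⟨m, rfl | rfl⟩ := Nat.even_or_odd' k
  · exact absurd ⟨m, rfl⟩ hk
  · exact hodd m

theorem ofReal_rpow_mul_one_sub_rpow (s t : ℝ) {x : ℝ} (hx : x ∈ Ioo 0 1) :
    ((x ^ (s - 1) * (1 - x) ^ (t - 1) : ℝ) : ℂ) =
      (x : ℂ) ^ ((s : ℂ) - 1) * (1 - (x : ℂ)) ^ ((t : ℂ) - 1) := by
  rw [Complex.ofReal_mul, Complex.ofReal_cpow hx.1.le, Complex.ofReal_cpow (by linarith [hx.2])]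
  push_cast
  rfl

theorem Complex.betaIntegral_ofReal (s t : ℝ) :
    Complex.betaIntegral s t = ∫ x in Ioo 0 1, ((x ^ (s - 1) * (1 - x) ^ (t - 1) : ℝ) : ℂ) := by
  rw [Complex.betaIntegral, intervalIntegral.integral_of_le zero_le_one,
    integral_Ioc_eq_integral_Ioo]
  exact setIntegral_congr_fun measurableSet_Ioo fun x hx =>
    (ofReal_rpow_mul_one_sub_rpow s t hx).symm

theorem integrableOn_rpow_mul_one_sub_rpow {s t : ℝ} (hs : 0 < s) (ht : 0 < t) :
    IntegrableOn (fun x : ℝ => x ^ (s - 1) * (1 - x) ^ (t - 1)) (Ioo 0 1) := by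
  have h := Complex.betaIntegral_convergent (u := s) (v := t) (by simpa) (by simpa)
  rw [intervalIntegrable_iff_integrableOn_Ioc_of_le zero_le_one] at h
  simpa [IntegrableOn] using ((h.mono_set Ioo_subset_Ioc_self).congr_fun
    (fun x hx => (ofReal_rpow_mul_one_sub_rpow s t hx).symm) measurableSet_Ioo).re

theorem integral_rpow_mul_one_sub_rpow {s t : ℝ} (hs : 0 < s) (ht : 0 < t) :
    ∫ x in Ioo 0 1, x ^ (s - 1) * (1 - x) ^ (t - 1) =
      Real.Gamma s * Real.Gamma t / Real.Gamma (s + t) := by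
  have h := Complex.betaIntegral_eq_Gamma_mul_div s t (by simpa) (by simpa)
  rw [Complex.betaIntegral_ofReal, integral_complex_ofReal, ← Complex.ofReal_add,
    Complex.Gamma_ofReal, Complex.Gamma_ofReal, Complex.Gamma_ofReal] at h
  exact_mod_cast h

theorem Real.sqrt_image_Ioo_zero_one : Real.sqrt '' Ioo 0 1 = Ioo 0 1 := by
  ext y
  constructor
  · rintro ⟨t, ht, rfl⟩
    exact ⟨Real.sqrt_pos.mpr ht.1, (Real.sqrt_lt' one_pos).mpr (by simpa using ht.2)⟩
  · intro hy
    exact ⟨y ^ 2, ⟨pow_pos hy.1 2, by nlinarith [hy.1, hy.2]⟩, Real.sqrt_sq hy.1.le⟩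

section SqrtSubstitution

variable (g : ℝ → ℝ)

theorem abs_deriv_sqrt_smul_eqOn :
    EqOn (fun t => |1 / (2 * √t)| • g √t) (fun t => g √t / (2 * √t)) (Ioo 0 1) := by
  intro t ht
  have : 0 < √t := Real.sqrt_pos.mpr ht.1
  simp only [smul_eq_mul, abs_of_pos (by positivity : 0 < 1 / (2 * √t))]
  ring

theorem integrableOn_Ioo_zero_one_iff_comp_sqrt :
    IntegrableOn g (Ioo 0 1) ↔ IntegrableOn (fun t => g √t / (2 * √t)) (Ioo 0 1) := by
  conv_lhs => rw [← Real.sqrt_image_Ioo_zero_one]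
  rw [integrableOn_image_iff_integrableOn_abs_deriv_smul measurableSet_Ioo
    (fun t ht => (Real.hasDerivAt_sqrt ht.1.ne').hasDerivWithinAt)
    (Real.strictMonoOn_sqrt.mono (Ioo_subset_Icc_self.trans Icc_subset_Ici_self)).injOn]
  exact integrableOn_congr_fun (abs_deriv_sqrt_smul_eqOn g) measurableSet_Ioo

theorem integral_Ioo_zero_one_eq_integral_comp_sqrt :
    ∫ u in Ioo 0 1, g u = ∫ t in Ioo 0 1, g √t / (2 * √t) := by
  conv_lhs => rw [← Real.sqrt_image_Ioo_zero_one]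
  rw [integral_image_eq_integral_abs_deriv_smul measurableSet_Ioo
    (fun t ht => (Real.hasDerivAt_sqrt ht.1.ne').hasDerivWithinAt)
    (Real.strictMonoOn_sqrt.mono (Ioo_subset_Icc_self.trans Icc_subset_Ici_self)).injOn]
  exact setIntegral_congr_fun measurableSet_Ioo (abs_deriv_sqrt_smul_eqOn g)

end SqrtSubstitution

section Symmetric

variable {E : Type*} [NormedAddCommGroup E] {f : ℝ → E}

theorem IntervalIntegrable.neg_of_even (hf : ∀ x, f (-x) = f x) {a : ℝ}
    (h : IntervalIntegrable f volume 0 a) : IntervalIntegrable f volume (-a) 0 := by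
  simpa only [hf, neg_zero] using ((IntervalIntegrable.iff_comp_neg (f := f)).mp h).symm

variable [NormedSpace ℝ E]

theorem intervalIntegral.integral_neg_self_of_odd (hf : ∀ x, f (-x) = -f x) (a : ℝ) :
    ∫ x in -a..a, f x = 0 := by
  have h := intervalIntegral.integral_comp_neg (a := -a) (b := a) f
  simp only [hf, intervalIntegral.integral_neg, neg_neg] at h
  have h2 : (2 : ℝ) • ∫ x in -a..a, f x = 0 := by
    rw [two_smul]
    nth_rewrite 1 [← h]
    exact neg_add_cancel _
  exact (smul_eq_zero.mp h2).resolve_left two_ne_zero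

theorem intervalIntegral.integral_neg_self_of_even (hf : ∀ x, f (-x) = f x) {a : ℝ}
    (h : IntervalIntegrable f volume 0 a) :
    ∫ x in -a..a, f x = (2 : ℝ) • ∫ x in 0..a, f x := by
  have hleft : ∫ x in -a..0, f x = ∫ x in 0..a, f x := by
    simpa [hf] using (intervalIntegral.integral_comp_neg (a := 0) (b := a) f).symm
  rw [← intervalIntegral.integral_add_adjacent_intervals (h.neg_of_even hf) h, hleft, two_smul]

end Symmetric

theorem pow_two_mul_mul_one_sub_sq_rpow_comp_sqrt_eqOn (α : ℝ) (m : ℕ) :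
    EqOn (fun t => √t ^ (2 * m) * (1 - √t ^ 2) ^ α / (2 * √t))
      (fun t => 2⁻¹ * (t ^ ((m + 1 / 2 : ℝ) - 1) * (1 - t) ^ ((α + 1) - 1))) (Ioo 0 1) := by
  intro t ht
  have hsqrt : 0 < √t := Real.sqrt_pos.mpr ht.1
  have hpow : t ^ ((m + 1 / 2 : ℝ) - 1) = t ^ m / √t := by
    rw [Real.sqrt_eq_rpow, ← Real.rpow_natCast t m, ← Real.rpow_sub ht.1]
    ring_nf
  simp only [pow_mul, Real.sq_sqrt ht.1.le, add_sub_cancel_right, hpow]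
  field_simp

theorem integrableOn_pow_two_mul_mul_one_sub_sq_rpow {α : ℝ} (hα : -1 < α) (m : ℕ) :
    IntegrableOn (fun u : ℝ => u ^ (2 * m) * (1 - u ^ 2) ^ α) (Ioo 0 1) := by
  rw [integrableOn_Ioo_zero_one_iff_comp_sqrt, integrableOn_congr_fun
    (pow_two_mul_mul_one_sub_sq_rpow_comp_sqrt_eqOn α m) measurableSet_Ioo]
  exact (integrableOn_rpow_mul_one_sub_rpow (by positivity) (by linarith)).const_mul _

theorem integral_Ioo_pow_two_mul_mul_one_sub_sq_rpow {α : ℝ} (hα : -1 < α) (m : ℕ) :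
    ∫ u in Ioo 0 1, u ^ (2 * m) * (1 - u ^ 2) ^ α =
      2⁻¹ * (Real.Gamma (m + 1 / 2) * Real.Gamma (α + 1) / Real.Gamma (m + 1 / 2 + (α + 1))) := by
  rw [integral_Ioo_zero_one_eq_integral_comp_sqrt, setIntegral_congr_fun measurableSet_Ioo
    (pow_two_mul_mul_one_sub_sq_rpow_comp_sqrt_eqOn α m), integral_const_mul,
    integral_rpow_mul_one_sub_rpow (by positivity) (by linarith)]

theorem intervalIntegrable_pow_two_mul_mul_one_sub_sq_rpow {α : ℝ} (hα : -1 < α) (m : ℕ) :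
    IntervalIntegrable (fun u : ℝ => u ^ (2 * m) * (1 - u ^ 2) ^ α) volume (-1) 1 := by
  have heven (u : ℝ) : (-u) ^ (2 * m) * (1 - (-u) ^ 2) ^ α = u ^ (2 * m) * (1 - u ^ 2) ^ α := by
    rw [pow_mul, pow_mul, neg_sq]
  have h := (intervalIntegrable_iff_integrableOn_Ioo_of_le zero_le_one).mpr
    (integrableOn_pow_two_mul_mul_one_sub_sq_rpow hα m)
  exact (h.neg_of_even heven).trans h

theorem intervalIntegrable_one_sub_sq_rpow {α : ℝ} (hα : -1 < α) :
    IntervalIntegrable (fun u : ℝ => (1 - u ^ 2) ^ α) volume (-1) 1 := by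
  simpa using intervalIntegrable_pow_two_mul_mul_one_sub_sq_rpow hα 0

theorem integral_pow_two_mul_add_one_mul_one_sub_sq_rpow (α : ℝ) (m : ℕ) :
    ∫ u in -1..1, u ^ (2 * m + 1) * (1 - u ^ 2) ^ α = 0 :=
  intervalIntegral.integral_neg_self_of_odd (fun u => by
    rw [Odd.neg_pow ⟨m, rfl⟩, neg_sq, neg_mul]) 1

theorem integral_pow_two_mul_mul_one_sub_sq_rpow {α : ℝ} (hα : -1 < α) (m : ℕ) :
    ∫ u in -1..1, u ^ (2 * m) * (1 - u ^ 2) ^ α =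
      Real.Gamma (m + 1 / 2) * Real.Gamma (α + 1) / Real.Gamma (m + 1 / 2 + (α + 1)) := by
  rw [intervalIntegral.integral_neg_self_of_even (fun u => by rw [pow_mul, pow_mul, neg_sq])
    ((intervalIntegrable_iff_integrableOn_Ioo_of_le zero_le_one).mpr
      (integrableOn_pow_two_mul_mul_one_sub_sq_rpow hα m)),
    intervalIntegral.integral_of_le zero_le_one, integral_Ioc_eq_integral_Ioo,
    integral_Ioo_pow_two_mul_mul_one_sub_sq_rpow hα, smul_eq_mul,
    mul_inv_cancel_left₀ two_ne_zero]

theorem Real.Gamma_add_nat_eq_mul_prod {x : ℝ} (hx : 0 < x) (m : ℕ) :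
    Real.Gamma (x + m) = Real.Gamma x * ∏ i ∈ Finset.range m, (x + i) := by
  induction m with
  | zero => simp
  | succ m ih =>
    rw [Nat.cast_succ, ← add_assoc, Real.Gamma_add_one (by positivity), ih,
      Finset.prod_range_succ]
    ring

theorem prod_range_two_mul_add {K : Type*} [Field K] [CharZero K] (a : K) (m : ℕ) :
    ∏ i ∈ Finset.range (2 * m), (a + i) =
      4 ^ m * (∏ i ∈ Finset.range m, (a / 2 + i)) * ∏ i ∈ Finset.range m, ((a + 1) / 2 + i) := by
  induction m with
  | zero => simp
  | succ m ih =>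
    rw [mul_add_one, Finset.prod_range_succ, Finset.prod_range_succ, ih,
      Finset.prod_range_succ, Finset.prod_range_succ]
    push_cast
    ring

theorem Nat.factorial_two_mul_eq_prod {K : Type*} [Field K] [CharZero K] (m : ℕ) :
    ((2 * m)! : K) = 4 ^ m * m ! * ∏ i ∈ Finset.range m, (1 / 2 + (i : K)) := by
  have hfac (k : ℕ) : (k ! : K) = ∏ i ∈ Finset.range k, (1 + (i : K)) := by
    rw [← Finset.prod_range_add_one_eq_factorial]
    push_cast
    simp only [add_comm _ (1 : K)]
  have h := prod_range_two_mul_add (1 : K) m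
  rw [one_add_one_eq_two, div_self (two_ne_zero' K)] at h
  rw [hfac, hfac, h]
  ring

theorem oneSubRpowCoeff_two_mul_mul_beta (β : ℝ) {ν : ℝ} (hν : 0 < ν) (m : ℕ) :
    oneSubRpowCoeff β (2 * m) *
        (Real.Gamma (m + 1 / 2) * Real.Gamma ν / Real.Gamma (m + 1 / 2 + ν)) =
      Real.Gamma (1 / 2) * Real.Gamma ν / Real.Gamma (ν + 1 / 2) *
        ((∏ i ∈ Finset.range m, (-β / 2 + i)) * (∏ i ∈ Finset.range m, ((1 - β) / 2 + i)) /
          ((∏ i ∈ Finset.range m, (ν + 1 / 2 + i)) * m !)) := by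
  have hhalf : Real.Gamma (m + 1 / 2) =
      Real.Gamma (1 / 2) * ∏ i ∈ Finset.range m, (1 / 2 + (i : ℝ)) := by
    rw [← Real.Gamma_add_nat_eq_mul_prod one_half_pos, add_comm]
  have hshift : Real.Gamma (m + 1 / 2 + ν) =
      Real.Gamma (ν + 1 / 2) * ∏ i ∈ Finset.range m, (ν + 1 / 2 + i) := by
    rw [← Real.Gamma_add_nat_eq_mul_prod (by positivity)]
    ring_nf
  have hprod_pos {x : ℝ} (hx : 0 < x) : 0 < ∏ i ∈ Finset.range m, (x + i) :=
    Finset.prod_pos fun i _ => by positivity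
  have := hprod_pos one_half_pos
  have := hprod_pos (show 0 < ν + 1 / 2 by positivity)
  have := Real.Gamma_pos_of_pos (show 0 < ν + 1 / 2 by positivity)
  rw [oneSubRpowCoeff, hhalf, hshift, prod_range_two_mul_add, Nat.factorial_two_mul_eq_prod,
    neg_add_eq_sub β 1]
  field_simp

theorem integral_eq_beta_hypergeometric_general (β : ℝ) (n : ℕ)
    (ξ : ℝ) (hξ : |ξ| < 1) :
    (∫ u in Set.Icc (-1 : ℝ) 1,
        (1 - ξ * u) ^ β * (1 - u ^ 2) ^ ((n : ℝ) - 1 / 2)) =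
      (Real.Gamma (1 / 2) * Real.Gamma ((n : ℝ) + 1 / 2) /
          Real.Gamma ((n : ℝ) + 1)) *
        hyp2F1 (-β / 2) ((1 - β) / 2) ((n : ℝ) + 1) (ξ ^ 2) := by
  have hα : (-1 : ℝ) < n - 1 / 2 := by linarith [n.cast_nonneg (α := ℝ)]
  have hsum := (hasSum_integral_one_sub_mul_rpow_mul (intervalIntegrable_one_sub_sq_rpow hα) β
    hξ).comp_two_mul_of_odd_eq_zero fun m => by
      rw [integral_pow_two_mul_add_one_mul_one_sub_sq_rpow, mul_zero]
  rw [integral_Icc_eq_integral_Ioc, ← intervalIntegral.integral_of_le (by norm_num),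
    ← hsum.tsum_eq, hyp2F1, ← tsum_mul_left]
  refine tsum_congr fun m => ?_
  rw [integral_pow_two_mul_mul_one_sub_sq_rpow hα, show (n : ℝ) - 1 / 2 + 1 = n + 1 / 2 by ring,
    mul_right_comm, oneSubRpowCoeff_two_mul_mul_beta β (by positivity),
    show (n : ℝ) + 1 / 2 + 1 / 2 = n + 1 by ring, pow_mul]
  ring

/-- For `β > -1`, `n ∈ ℕ`, and real `ξ` with `|ξ| < 1`,
`∫_{-1}^1 (1-ξu)^β (1-u²)^{n-1/2} du = B(1/2, n+1/2) ₂F₁(-β/2, (1-β)/2; n+1; ξ²)`,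
where `B(x,y) = Γ(x)Γ(y)/Γ(x+y)`. -/
theorem integral_eq_beta_hypergeometric (β : ℝ) (hβ : -1 < β) (n : ℕ)
    (ξ : ℝ) (hξ : |ξ| < 1) :
    (∫ u in Set.Icc (-1 : ℝ) 1,
        (1 - ξ * u) ^ β * (1 - u ^ 2) ^ ((n : ℝ) - 1 / 2)) =
      (Real.Gamma (1 / 2) * Real.Gamma ((n : ℝ) + 1 / 2) /
          Real.Gamma ((n : ℝ) + 1)) *
        hyp2F1 (-β / 2) ((1 - β) / 2) ((n : ℝ) + 1) (ξ ^ 2) :=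
  integral_eq_beta_hypergeometric_general β n ξ hξ
end

section
/- The function Φ_R(r) = (8/π)((α+1)/α) sin(πα) r (1-r²)^{α-1} · [ (1+r)^{2+2α}(1+α-r) - (1-r)^{2+2α}(1+α+r) - 2r(1-r²)^{1+α} cos(πα) ] / [ (1+r)^{2+2α} + (1-r)^{2+2α} + 2(1-r²)^{1+α} cos(πα) ]² is nonnegative for all r ∈ (0,1) and all α ∈ (0,1). -/
open Real

/-- The density `Φ_R` of the radius of the 3-dimensional standard Lévy walk
limit process is nonnegative for all `r ∈ (0,1)` and all `α ∈ (0,1)`. -/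
theorem levy_walk_3d_radial_density_nonneg
    (α : ℝ) (hα : α ∈ Set.Ioo (0 : ℝ) 1) (r : ℝ) (hr : r ∈ Set.Ioo (0 : ℝ) 1) :
    0 ≤ (8 / π) * ((α + 1) / α) * Real.sin (π * α) * r * (1 - r ^ 2) ^ (α - 1) *
      ((1 + r) ^ (2 + 2 * α) * (1 + α - r) - (1 - r) ^ (2 + 2 * α) * (1 + α + r)
          - 2 * r * (1 - r ^ 2) ^ (1 + α) * Real.cos (π * α)) /
      ((1 + r) ^ (2 + 2 * α) + (1 - r) ^ (2 + 2 * α)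
          + 2 * (1 - r ^ 2) ^ (1 + α) * Real.cos (π * α)) ^ 2 := by
  obtain ⟨hα0, hα1⟩ := hα
  obtain ⟨hr0, hr1⟩ := hr
  have hx : (0:ℝ) < 1 + r := by linarith
  have hy : (0:ℝ) < 1 - r := by linarith
  have hr2 : (0:ℝ) < 1 - r ^ 2 := by nlinarith
  set A := (1 + r) ^ (1 + α) with hAdef
  set B := (1 - r) ^ (1 + α) with hBdef
  have hA : 0 < A := Real.rpow_pos_of_pos hx _
  have hB : 0 < B := Real.rpow_pos_of_pos hy _
  have e1 : (1 + r) ^ (2 + 2 * α) = A ^ (2:ℕ) := by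
    rw [hAdef, ← Real.rpow_natCast ((1 + r) ^ (1 + α)) 2, ← Real.rpow_mul hx.le]
    norm_num; ring_nf
  have e2 : (1 - r) ^ (2 + 2 * α) = B ^ (2:ℕ) := by
    rw [hBdef, ← Real.rpow_natCast ((1 - r) ^ (1 + α)) 2, ← Real.rpow_mul hy.le]
    norm_num; ring_nf
  have e3 : (1 - r ^ 2) ^ (1 + α) = A * B := by
    rw [show (1:ℝ) - r ^ 2 = (1 + r) * (1 - r) by ring, Real.mul_rpow hx.le hy.le]
  -- key inequality
  have key : (1 + α + r) * B ≤ (1 + α - r) * A := by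
    have hAe : A = (1 + r) * (1 + r) ^ α := by
      rw [hAdef, Real.rpow_add hx, Real.rpow_one]
    have hBe : B = (1 - r) * (1 - r) ^ α := by
      rw [hBdef, Real.rpow_add hy, Real.rpow_one]
    have h1 : (1 + α + r) * (1 - r) ≤ (1 + α - r) * (1 + r) := by nlinarith
    have h2 : (1 - r) ^ α ≤ (1 + r) ^ α :=
      Real.rpow_le_rpow hy.le (by linarith) hα0.le
    calc (1 + α + r) * B = ((1 + α + r) * (1 - r)) * (1 - r) ^ α := by rw [hBe]; ring
      _ ≤ ((1 + α - r) * (1 + r)) * (1 + r) ^ α := by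
          apply mul_le_mul h1 h2 (Real.rpow_nonneg hy.le _) (by nlinarith)
      _ = (1 + α - r) * A := by rw [hAe]; ring
  have hc : Real.cos (π * α) ≤ 1 := Real.cos_le_one _
  have hbracket : 0 ≤ (1 + r) ^ (2 + 2 * α) * (1 + α - r)
      - (1 - r) ^ (2 + 2 * α) * (1 + α + r)
      - 2 * r * (1 - r ^ 2) ^ (1 + α) * Real.cos (π * α) := by
    rw [e1, e2, e3]
    nlinarith [mul_nonneg (by positivity : (0:ℝ) ≤ A + B) (sub_nonneg.2 key),
      mul_nonneg (mul_nonneg hr0.le (mul_nonneg hA.le hB.le)) (sub_nonneg.2 hc)]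
  have hsin : 0 < Real.sin (π * α) :=
    Real.sin_pos_of_pos_of_lt_pi (by positivity) (by nlinarith [Real.pi_pos])
  have hpre : 0 ≤ 8 / π * ((α + 1) / α) * Real.sin (π * α) * r * (1 - r ^ 2) ^ (α - 1) := by
    have h8 : (0:ℝ) ≤ 8 / π := by positivity
    have hq : (0:ℝ) ≤ (α + 1) / α := div_nonneg (by linarith) hα0.le
    exact mul_nonneg (mul_nonneg (mul_nonneg (mul_nonneg h8 hq) hsin.le) hr0.le)
      (Real.rpow_nonneg hr2.le _)
  exact div_nonneg (mul_nonneg hpre hbracket) (sq_nonneg _)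
end

section
/- For the 3-dimensional overshooting Lévy walk limit with α ∈ (0,1), the radial density for r > 1 is Φ_R^Z(r) = (2 sin(απ)/π) · [ (1+r)^α(1+(2+α)r) - (r-1)^α((2+α)r-1) ] / [ r((r-1)^{1+α} - (1+r)^{1+α})² ], and this expression is strictly positive for all r > 1. -/
open Real

/-- The radial density of the 3-dimensional overshooting Lévy walk limit for
`r > 1`,
`Φ_R^Z(r) = (2 sin(απ)/π) [ (1+r)^α(1+(2+α)r) - (r-1)^α((2+α)r-1) ] /
[ r((r-1)^{1+α} - (1+r)^{1+α})² ]`, is strictly positive for all `r > 1` and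
`α ∈ (0,1)`. -/
theorem overshooting_3d_radial_density_pos_of_one_lt
    (α : ℝ) (hα : α ∈ Set.Ioo (0 : ℝ) 1) (r : ℝ) (hr : 1 < r) :
    0 < (2 * Real.sin (α * π) / π) *
      ((1 + r) ^ α * (1 + (2 + α) * r) - (r - 1) ^ α * ((2 + α) * r - 1)) /
      (r * ((r - 1) ^ (1 + α) - (1 + r) ^ (1 + α)) ^ 2) := by
  obtain ⟨hα0, hα1⟩ := hα
  have hr0 : (0:ℝ) < r - 1 := by linarith
  have hr1 : (0:ℝ) < 1 + r := by linarith
  have hsin : 0 < Real.sin (α * π) := Real.sin_pos_of_pos_of_lt_pi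
    (by positivity) (by nlinarith [Real.pi_pos])
  have hrpow : (r - 1) ^ α < (1 + r) ^ α :=
    Real.rpow_lt_rpow (le_of_lt hr0) (by linarith) hα0
  have hnum : 0 < (1 + r) ^ α * (1 + (2 + α) * r) - (r - 1) ^ α * ((2 + α) * r - 1) := by
    have h1 : (0:ℝ) < (2 + α) * r - 1 := by nlinarith
    have h2 : ((2 + α) * r - 1) < 1 + (2 + α) * r := by linarith
    have hp : (0:ℝ) < (r - 1) ^ α := Real.rpow_pos_of_pos hr0 α
    nlinarith
  have hne : (r - 1) ^ (1 + α) - (1 + r) ^ (1 + α) ≠ 0 := by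
    have : (r - 1) ^ (1 + α) < (1 + r) ^ (1 + α) :=
      Real.rpow_lt_rpow (le_of_lt hr0) (by linarith) (by linarith)
    linarith
  have hden : 0 < r * ((r - 1) ^ (1 + α) - (1 + r) ^ (1 + α)) ^ 2 := by positivity
  have hpi := Real.pi_pos
  positivity
end
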